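/- arXiv:2101.08386 — 4 statements merged into one kernel-verified Lean document; each statement's English description precedes it below -/
import Mathlib

section
/- Suppose the regularized objective F_D(B,C) = 𝓛(f(B, C·wᵢ), rᵢ, i=1..n) + λ·ℛ(B,C) has a unique minimizer (B̂(D), Ĉ(D)) for every dataset D, and suppose τ(w) = 𝒯w with 𝒯 invertible satisfies ℛ(B, C𝒯) = ℛ(B, C) for all B, C. Define L(D,w) = f(B̂(D), Ĉ(D)·w). Then L(τ(D), τ(w)) = L(D, w) for all D and w. -/
open Matrix

/-- Invariance of learners based on the unique minimizer of a regularized loss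
`𝓛(f(B, C wᵢ), rᵢ) + λ ℛ(B, C)`, with respect to an invertible linear map
`τ w = 𝒯 w` whose matrix satisfies `ℛ(B, C𝒯) = ℛ(B, C)`. -/
theorem invariance_with_regularization {d m : ℕ} {P : Type*}
    (f : P → (Fin m → ℝ) → ℝ)
    (𝓛 : List (ℝ × ℝ) → ℝ)
    (ℛ : P → Matrix (Fin m) (Fin d) ℝ → ℝ) (lam : ℝ) (hlam : 0 ≤ lam)
    (F : List ((Fin d → ℝ) × ℝ) → P → Matrix (Fin m) (Fin d) ℝ → ℝ)
    (hF : ∀ D B C, F D B C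
      = 𝓛 (D.map (fun p => (f B (C.mulVec p.1), p.2))) + lam * ℛ B C)
    (Bh : List ((Fin d → ℝ) × ℝ) → P)
    (Ch : List ((Fin d → ℝ) × ℝ) → Matrix (Fin m) (Fin d) ℝ)
    (hmin : ∀ D B C, F D (Bh D) (Ch D) ≤ F D B C)
    (huniq : ∀ D B C, (∀ B' C', F D B C ≤ F D B' C') → B = Bh D ∧ C = Ch D)
    (𝒯 : Matrix (Fin d) (Fin d) ℝ) (h𝒯 : IsUnit 𝒯)
    (hℛ : ∀ B C, ℛ B (C * 𝒯) = ℛ B C)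
    (D : List ((Fin d → ℝ) × ℝ)) (w : Fin d → ℝ) :
    f (Bh (D.map (fun p => (𝒯.mulVec p.1, p.2))))
      ((Ch (D.map (fun p => (𝒯.mulVec p.1, p.2)))).mulVec (𝒯.mulVec w))
    = f (Bh D) ((Ch D).mulVec w) := by
  have hdet : IsUnit 𝒯.det := (Matrix.isUnit_iff_isUnit_det 𝒯).mp h𝒯
  have hinv : 𝒯⁻¹ * 𝒯 = 1 := Matrix.nonsing_inv_mul 𝒯 hdet
  set D' := D.map (fun p => (𝒯.mulVec p.1, p.2)) with hD'
  have key : ∀ B C, F D' B C = F D B (C * 𝒯) := by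
    intro B C
    rw [hF, hF, hℛ, hD', List.map_map]
    congr 2
    apply List.map_congr_left
    intro p _
    simp [Matrix.mulVec_mulVec]
  have hle : ∀ B C, F D' (Bh D) (Ch D * 𝒯⁻¹) ≤ F D' B C := by
    intro B C
    rw [key, key, Matrix.nonsing_inv_mul_cancel_right _ _ hdet]
    exact hmin D B (C * 𝒯)
  obtain ⟨hB, hC⟩ := huniq D' (Bh D) (Ch D * 𝒯⁻¹) hle
  rw [← hB, ← hC, Matrix.mulVec_mulVec, Matrix.nonsing_inv_mul_cancel_right _ _ hdet]
end

section
/- Combining the previous constructions: for a learner L invariant to every orthogonal transformation τ fixing the dataset (τ(D) = D ⟹ L(D,τ(w)) = L(D,w)), and a dataset D whose encoded words lie in X ⊕ X with X = span(x₁,...,x₂₄), the adversarial inputs w₁ = (α,α) and w₂ = (α,β), with α ⊥ β orthonormal in X^⊥, satisfy L(D, w₁) = L(D, w₂). Hence L cannot simultaneously assign rating 1 to all identical pairs and rating 0 to all non-identical pairs. -/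
open Matrix

/-- Adversarial examples: if a learner `L` is invariant to every orthogonal
transformation `τ(u,v) = (u, T v)` fixing the dataset, and all encoded words of
`D` lie in `X ⊕ X` with `X = span(x₁,…,x₂₄)`, then for orthonormal `α ⊥ β` in
`X^⊥` the inputs `w₁ = (α,α)` and `w₂ = (α,β)` get equal ratings; hence `L`
cannot rate all identical pairs 1 and all non-identical pairs 0. -/
theorem adversarial_examples {m : ℕ} (hm : 26 ≤ m)
    (x : Fin 24 → Fin m → ℝ) (hli : LinearIndependent ℝ x)
    (α β : Fin m → ℝ)
    (hαx : ∀ i, ∑ l, x i l * α l = 0) (hβx : ∀ i, ∑ l, x i l * β l = 0)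
    (hαα : ∑ l, α l * α l = 1) (hββ : ∑ l, β l * β l = 1)
    (hαβ : ∑ l, α l * β l = 0)
    (D : List (((Fin m → ℝ) × (Fin m → ℝ)) × ℝ))
    (hD : ∀ p ∈ D, p.1.1 ∈ Submodule.span ℝ (Set.range x) ∧
      p.1.2 ∈ Submodule.span ℝ (Set.range x))
    (L : List (((Fin m → ℝ) × (Fin m → ℝ)) × ℝ) → (Fin m → ℝ) × (Fin m → ℝ) → ℝ)
    (hinv : ∀ T : Matrix (Fin m) (Fin m) ℝ, Tᵀ * T = 1 →
      D.map (fun p => ((p.1.1, T.mulVec p.1.2), p.2)) = D →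
      ∀ w : (Fin m → ℝ) × (Fin m → ℝ), L D (w.1, T.mulVec w.2) = L D w) :
    L D (α, α) = L D (α, β) ∧
    ¬ ((∀ u : Fin m → ℝ, L D (u, u) = 1) ∧
       (∀ u v : Fin m → ℝ, u ≠ v → L D (u, v) = 0)) := by
  classical
  set γ : Fin m → ℝ := fun l => α l - β l with hγ
  set T : Matrix (Fin m) (Fin m) ℝ := 1 - Matrix.vecMulVec γ γ with hT
  have hβα : ∑ l, β l * α l = 0 := by
    rw [← hαβ]; exact Finset.sum_congr rfl fun l _ => mul_comm _ _
  have hγγ : ∑ l, γ l * γ l = 2 := by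
    have : ∀ l, γ l * γ l = α l * α l - α l * β l - β l * α l + β l * β l := by
      intro l; simp only [hγ]; ring
    simp_rw [this]
    rw [Finset.sum_add_distrib, Finset.sum_sub_distrib, Finset.sum_sub_distrib,
      hαα, hαβ, hβα, hββ]
    ring
  -- T is orthogonal
  have hGsym : (Matrix.vecMulVec γ γ)ᵀ = Matrix.vecMulVec γ γ := by
    ext i j; simp [Matrix.vecMulVec_apply, mul_comm]
  have hGG : Matrix.vecMulVec γ γ * Matrix.vecMulVec γ γ
      = (2 : ℝ) • Matrix.vecMulVec γ γ := by
    ext i j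
    simp only [Matrix.mul_apply, Matrix.vecMulVec_apply, Matrix.smul_apply,
      smul_eq_mul]
    have : ∀ k, γ i * γ k * (γ k * γ j) = (γ k * γ k) * (γ i * γ j) := by
      intro k; ring
    simp_rw [this]
    rw [← Finset.sum_mul, hγγ]
  have hTorth : Tᵀ * T = 1 := by
    rw [hT, Matrix.transpose_sub, Matrix.transpose_one, hGsym,
      sub_mul, mul_sub, mul_sub, hGG, two_smul]
    simp only [one_mul, mul_one]
    abel
  -- action of T
  have hTmul : ∀ v : Fin m → ℝ, T.mulVec v = v - (∑ l, γ l * v l) • γ := by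
    intro v; funext k
    simp only [hT, Matrix.sub_mulVec, Matrix.one_mulVec, Pi.sub_apply,
      Pi.smul_apply, smul_eq_mul]
    congr 1
    simp only [Matrix.mulVec, dotProduct, Matrix.vecMulVec_apply]
    rw [Finset.sum_mul]
    exact Finset.sum_congr rfl fun l _ => by ring
  have hγβ : ∑ l, γ l * β l = -1 := by
    have : ∀ l, γ l * β l = α l * β l - β l * β l := by
      intro l; simp only [hγ]; ring
    simp_rw [this]
    rw [Finset.sum_sub_distrib, hαβ, hββ]; ring
  have hTβ : T.mulVec β = α := by
    rw [hTmul, hγβ]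
    funext k
    simp only [Pi.sub_apply, Pi.smul_apply, smul_eq_mul, hγ]
    ring
  -- T fixes the span of x
  have hfix : ∀ v ∈ Submodule.span ℝ (Set.range x), T.mulVec v = v := by
    intro v hv
    have horth : ∑ l, γ l * v l = 0 := by
      induction hv using Submodule.span_induction with
      | mem w hw =>
        obtain ⟨i, rfl⟩ := hw
        have : ∀ l, γ l * x i l = x i l * α l - x i l * β l := by
          intro l; simp only [hγ]; ring
        simp_rw [this]
        rw [Finset.sum_sub_distrib, hαx, hβx]; ring
      | zero => simp
      | add w₁ w₂ _ _ h1 h2 =>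
        simp only [Pi.add_apply, mul_add, Finset.sum_add_distrib, h1, h2,
          add_zero]
      | smul c w _ h =>
        simp only [Pi.smul_apply, smul_eq_mul]
        have : ∀ l, γ l * (c * w l) = c * (γ l * w l) := fun l => by ring
        simp_rw [this, ← Finset.mul_sum, h, mul_zero]
    rw [hTmul, horth, zero_smul, sub_zero]
  have hDfix : D.map (fun p => ((p.1.1, T.mulVec p.1.2), p.2)) = D := by
    have : D.map (fun p => ((p.1.1, T.mulVec p.1.2), p.2)) = D.map id := by
      apply List.map_congr_left
      intro p hp
      rw [hfix _ (hD p hp).2]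
      rfl
    rw [this, List.map_id]
  have key : L D (α, α) = L D (α, β) := by
    have := hinv T hTorth hDfix (α, β)
    simpa [hTβ] using this
  refine ⟨key, ?_⟩
  rintro ⟨h1, h2⟩
  have hne : α ≠ β := by
    intro h
    rw [h] at hαβ
    rw [hαβ] at hββ
    norm_num at hββ
  have := h1 α
  rw [key, h2 α β hne] at this
  norm_num at this
end

section
/- Let 𝒯 be a signed permutation matrix. For any matrices A, B (with B having positive entries) of matching sizes, ((A𝒯ᵀ) ⊘ (B|𝒯ᵀ|))𝒯 = A ⊘ B, where ⊘ denotes entrywise (Hadamard) division and |𝒯ᵀ| is the entrywise absolute value. -/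
open Matrix

/-!
Right multiplication by `𝒯ᵀ = diagonal ε * (σ.permMatrix)ᵀ` rescales the columns of `A` by the
signs `ε` and then permutes them by `σ`, while `|𝒯ᵀ| = (σ.permMatrix)ᵀ` applies the same
permutation to the columns of `B` without the signs. Entrywise division commutes with permuting
columns and pulls the column scaling out, so right multiplication by `𝒯 = σ.permMatrix * diagonal ε`
undoes the permutation and multiplies each column by `ε j ^ 2 = 1`.
-/

namespace Matrix

variable {l n α : Type*}

def hadamardDiv [Div α] (X Y : Matrix l n α) : Matrix l n α :=
  of fun i j => X i j / Y i j

infixl:100 " ⊘ " => Matrix.hadamardDiv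

theorem submatrix_hadamardDiv_submatrix {k m : Type*} [Div α] (X Y : Matrix l n α)
    (r : k → l) (c : m → n) :
    X.submatrix r c ⊘ Y.submatrix r c = (X ⊘ Y).submatrix r c :=
  rfl

variable [Fintype n] [DecidableEq n]

theorem mul_diagonal_hadamardDiv [Field α] (X Y : Matrix l n α) (d : n → α) :
    (X * diagonal d) ⊘ Y = (X ⊘ Y) * diagonal d := by
  ext i j
  simp only [hadamardDiv, of_apply, mul_diagonal, mul_div_right_comm]

theorem mul_transpose_permMatrix [NonAssocSemiring α] (M : Matrix l n α) (σ : Equiv.Perm n) :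
    M * (σ.permMatrix α)ᵀ = M.submatrix id σ := by
  rw [transpose_permMatrix, PEquiv.mul_toMatrix_toPEquiv, Equiv.Perm.inv_def, Equiv.symm_symm]

theorem submatrix_id_mul_permMatrix [NonAssocSemiring α] (M : Matrix l n α) (σ : Equiv.Perm n) :
    M.submatrix id σ * σ.permMatrix α = M := by
  rw [PEquiv.mul_toMatrix_toPEquiv, submatrix_submatrix]
  simp

theorem map_abs_permMatrix_mul_diagonal [Ring α] [LinearOrder α] [IsOrderedRing α]
    (σ : Equiv.Perm n) {ε : n → α} (hε : ∀ i, |ε i| = 1) :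
    (σ.permMatrix α * diagonal ε).map abs = σ.permMatrix α := by
  have hdiag : (diagonal ε).map abs = 1 := by
    rw [diagonal_map abs_zero, ← diagonal_one]
    exact congrArg diagonal (funext hε)
  rw [PEquiv.toMatrix_toPEquiv_mul, ← submatrix_map, hdiag, ← PEquiv.toMatrix_toPEquiv_mul,
    Matrix.mul_one]

end Matrix

theorem hadamard_div_signedPerm_general {m n : ℕ}
    (A B : Matrix (Fin m) (Fin n) ℝ)
    (𝒯 : Matrix (Fin n) (Fin n) ℝ)
    (h𝒯 : ∃ (σ : Equiv.Perm (Fin n)) (ε : Fin n → ℝ),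
      (∀ i, ε i = 1 ∨ ε i = -1) ∧ 𝒯 = σ.permMatrix ℝ * Matrix.diagonal ε) :
    (Matrix.of fun i j =>
        (A * 𝒯ᵀ) i j / ((B * 𝒯ᵀ.map (fun t => |t|)) i j)) * 𝒯
      = Matrix.of (fun i j => A i j / B i j) := by
  obtain ⟨σ, ε, hε, rfl⟩ := h𝒯
  have hε_abs : ∀ i, |ε i| = 1 := fun i => by rcases hε i with h | h <;> simp [h]
  have hε_sq : diagonal ε * diagonal ε = 1 := by
    rw [diagonal_mul_diagonal, ← diagonal_one]
    exact congrArg diagonal (funext fun i => by rcases hε i with h | h <;> simp [h])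
  change ((A * _ᵀ) ⊘ (B * _ᵀ.map abs)) * _ = A ⊘ B
  rw [transpose_map, map_abs_permMatrix_mul_diagonal σ hε_abs, transpose_mul, diagonal_transpose,
    ← Matrix.mul_assoc A, mul_transpose_permMatrix, mul_transpose_permMatrix,
    submatrix_hadamardDiv_submatrix, ← Matrix.mul_assoc, submatrix_id_mul_permMatrix,
    mul_diagonal_hadamardDiv, Matrix.mul_assoc, hε_sq, Matrix.mul_one]

/-- Key algebraic step in the Adam-invariance proof: for a signed permutation
matrix `𝒯` and `B` with positive entries,
`((A𝒯ᵀ) ⊘ (B|𝒯ᵀ|)) 𝒯 = A ⊘ B` (entrywise division, entrywise absolute value). -/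
theorem hadamard_div_signedPerm {m n : ℕ}
    (A B : Matrix (Fin m) (Fin n) ℝ) (hB : ∀ i j, 0 < B i j)
    (𝒯 : Matrix (Fin n) (Fin n) ℝ)
    (h𝒯 : ∃ (σ : Equiv.Perm (Fin n)) (ε : Fin n → ℝ),
      (∀ i, ε i = 1 ∨ ε i = -1) ∧ 𝒯 = σ.permMatrix ℝ * Matrix.diagonal ε) :
    (Matrix.of fun i j =>
        (A * 𝒯ᵀ) i j / ((B * 𝒯ᵀ.map (fun t => |t|)) i j)) * 𝒯
      = Matrix.of (fun i j => A i j / B i j) :=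
  hadamard_div_signedPerm_general A B 𝒯 h𝒯
end

section
/- Consider the deterministic Adam iteration with moment updates M⁽¹⁾ᵢ₊₁ = ρ₁M⁽¹⁾ᵢ + (1−ρ₁)∇F(Θᵢ), M⁽²⁾ᵢ₊₁ = ρ₂M⁽²⁾ᵢ + (1−ρ₂)(∇F(Θᵢ))^{⊙2}, Θᵢ₊₁ = Θᵢ − θᵢ M⁽¹⁾ᵢ₊₁ ⊘ (M⁽²⁾ᵢ₊₁)^{⊙1/2}, applied to F_D(B,C) and to F_{τ(D)}(B,C) = F_D(B, C𝒯), where 𝒯 is a signed permutation matrix, with initializations B′₀ = B₀, C′₀𝒯 = C₀ and zero initial moments. Then for all i: B′ᵢ = Bᵢ, C′ᵢ𝒯 = Cᵢ, M′ᵢ^{(1,C)} = Mᵢ^{(1,C)}𝒯ᵀ, and M′ᵢ^{(2,C)} = Mᵢ^{(2,C)}|𝒯ᵀ| (assuming all entrywise divisions are well defined). -/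
/-!
Right multiplication by `𝒯ᵀ`, for a signed permutation matrix `𝒯`, permutes the columns and
flips some of their signs. Squaring entrywise erases the signs, so `(G𝒯ᵀ)^{⊙2} = G^{⊙2}|𝒯ᵀ|`,
and for the same reason `((A𝒯ᵀ) ⊘ f(V|𝒯ᵀ|))𝒯 = A ⊘ f(V)` for any entrywise normalizer `f`.
By induction on the step, both runs see the same gradients, so the moments of the transformed
run are those of the original one multiplied by `𝒯ᵀ` resp. `|𝒯ᵀ|`, and the two identities
carry `B′ᵢ = Bᵢ` and `C′ᵢ𝒯 = Cᵢ` to the next step.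
-/

open Matrix

namespace Matrix

variable {m n R : Type*} [Fintype n] [DecidableEq n]

def IsSignedPerm [Ring R] (𝒯 : Matrix n n R) : Prop :=
  ∃ (σ : Equiv.Perm n) (ε : n → R), (∀ i, ε i = 1 ∨ ε i = -1) ∧ 𝒯 = σ.permMatrix R * diagonal ε

section SignedPerm

variable (σ : Equiv.Perm n) {ε : n → R}

theorem mul_signedPerm_apply [CommRing R] (M : Matrix m n R) (a : m) (b : n) :
    (M * (σ.permMatrix R * diagonal ε)) a b = M a (σ.symm b) * ε b := by
  rw [← Matrix.mul_assoc, mul_diagonal, Equiv.Perm.permMatrix, PEquiv.mul_toMatrix_toPEquiv]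
  rfl

theorem mul_signedPerm_transpose_apply [CommRing R] (M : Matrix m n R) (a : m) (b : n) :
    (M * (σ.permMatrix R * diagonal ε)ᵀ) a b = M a (σ b) * ε (σ b) := by
  rw [transpose_mul, diagonal_transpose, transpose_permMatrix, ← Matrix.mul_assoc,
    Equiv.Perm.permMatrix, PEquiv.mul_toMatrix_toPEquiv, submatrix_apply, mul_diagonal]
  rfl

variable [CommRing R] [LinearOrder R] [IsOrderedRing R]

theorem map_abs_signedPerm (hε : ∀ i, |ε i| = 1) :
    (σ.permMatrix R * diagonal ε).map abs = σ.permMatrix R := by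
  ext a b
  rw [map_apply, mul_diagonal, abs_mul, hε, mul_one, abs_eq_self, Equiv.Perm.permMatrix,
    PEquiv.toMatrix_apply]
  split_ifs <;> simp

theorem mul_map_abs_signedPerm_transpose_apply (hε : ∀ i, |ε i| = 1) (M : Matrix m n R)
    (a : m) (b : n) : (M * (σ.permMatrix R * diagonal ε)ᵀ.map abs) a b = M a (σ b) := by
  rw [transpose_map, map_abs_signedPerm σ hε, transpose_permMatrix, Equiv.Perm.permMatrix,
    PEquiv.mul_toMatrix_toPEquiv]
  rfl

theorem of_sq_mul_signedPerm_transpose (hε : ∀ i, |ε i| = 1) (G : Matrix m n R) :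
    of (fun a b => ((G * (σ.permMatrix R * diagonal ε)ᵀ) a b) ^ 2)
      = of (fun a b => G a b ^ 2) * (σ.permMatrix R * diagonal ε)ᵀ.map abs := by
  ext a b
  rw [of_apply, mul_signedPerm_transpose_apply, mul_map_abs_signedPerm_transpose_apply σ hε,
    of_apply, mul_pow, ← sq_abs (ε _), hε, one_pow, mul_one]

end SignedPerm

theorem of_div_mul_signedPerm_transpose_mul_signedPerm {R : Type*} [Field R] [LinearOrder R]
    [IsOrderedRing R] (σ : Equiv.Perm n) {ε : n → R} (hε : ∀ i, |ε i| = 1) (f : R → R)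
    (A V : Matrix m n R) :
    of (fun a b => (A * (σ.permMatrix R * diagonal ε)ᵀ) a b
        / f ((V * (σ.permMatrix R * diagonal ε)ᵀ.map abs) a b)) * (σ.permMatrix R * diagonal ε)
      = of (fun a b => A a b / f (V a b)) := by
  ext a b
  rw [mul_signedPerm_apply, of_apply, mul_signedPerm_transpose_apply,
    mul_map_abs_signedPerm_transpose_apply σ hε, Equiv.apply_symm_apply, of_apply,
    mul_div_right_comm, mul_assoc, ← sq, ← sq_abs, hε, one_pow, mul_one]

namespace IsSignedPerm

variable {𝒯 : Matrix n n R}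

theorem of_sq_mul_transpose [CommRing R] [LinearOrder R] [IsOrderedRing R]
    (h𝒯 : IsSignedPerm 𝒯) (G : Matrix m n R) :
    of (fun a b => ((G * 𝒯ᵀ) a b) ^ 2) = of (fun a b => G a b ^ 2) * 𝒯ᵀ.map abs := by
  obtain ⟨σ, ε, hε, rfl⟩ := h𝒯
  exact of_sq_mul_signedPerm_transpose σ (fun i => (abs_eq zero_le_one).2 (hε i)) G

theorem of_div_mul_transpose_mul [Field R] [LinearOrder R] [IsOrderedRing R]
    (h𝒯 : IsSignedPerm 𝒯) (f : R → R) (A V : Matrix m n R) :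
    of (fun a b => (A * 𝒯ᵀ) a b / f ((V * 𝒯ᵀ.map abs) a b)) * 𝒯
      = of (fun a b => A a b / f (V a b)) := by
  obtain ⟨σ, ε, hε, rfl⟩ := h𝒯
  exact of_div_mul_signedPerm_transpose_mul_signedPerm σ
    (fun i => (abs_eq zero_le_one).2 (hε i)) f A V

end IsSignedPerm

end Matrix

theorem adam_conjugation_general {p q d : ℕ}
    (gB : (Fin p → ℝ) → Matrix (Fin q) (Fin d) ℝ → (Fin p → ℝ))
    (gC : (Fin p → ℝ) → Matrix (Fin q) (Fin d) ℝ → Matrix (Fin q) (Fin d) ℝ)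
    (𝒯 : Matrix (Fin d) (Fin d) ℝ)
    (h𝒯 : ∃ (σ : Equiv.Perm (Fin d)) (ε : Fin d → ℝ),
      (∀ i, ε i = 1 ∨ ε i = -1) ∧ 𝒯 = σ.permMatrix ℝ * Matrix.diagonal ε)
    (ρ₁ ρ₂ : ℝ)
    (θ : ℕ → ℝ)
    (B B' : ℕ → Fin p → ℝ) (C C' : ℕ → Matrix (Fin q) (Fin d) ℝ)
    (M1B M2B M1B' M2B' : ℕ → Fin p → ℝ)
    (M1C M2C M1C' M2C' : ℕ → Matrix (Fin q) (Fin d) ℝ)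
    -- Adam iteration for the original objective `F_D`:
    (hM1B : ∀ i, M1B (i + 1) = ρ₁ • M1B i + (1 - ρ₁) • gB (B i) (C i))
    (hM2B : ∀ i, M2B (i + 1) = ρ₂ • M2B i + (1 - ρ₂) • fun a => (gB (B i) (C i) a) ^ 2)
    (hBu : ∀ i, B (i + 1) = fun a => B i a - θ i * (M1B (i + 1) a / Real.sqrt (M2B (i + 1) a)))
    (hM1C : ∀ i, M1C (i + 1) = ρ₁ • M1C i + (1 - ρ₁) • gC (B i) (C i))
    (hM2C : ∀ i, M2C (i + 1)
      = ρ₂ • M2C i + (1 - ρ₂) • Matrix.of (fun a b => (gC (B i) (C i) a b) ^ 2))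
    (hCu : ∀ i, C (i + 1)
      = C i - θ i • Matrix.of (fun a b => M1C (i + 1) a b / Real.sqrt (M2C (i + 1) a b)))
    -- Adam iteration for the transformed objective `F_{τ(D)}`,
    -- whose gradients are `gB (B, C𝒯)` and `gC (B, C𝒯) 𝒯ᵀ` by the chain rule:
    (hM1B' : ∀ i, M1B' (i + 1) = ρ₁ • M1B' i + (1 - ρ₁) • gB (B' i) (C' i * 𝒯))
    (hM2B' : ∀ i, M2B' (i + 1)
      = ρ₂ • M2B' i + (1 - ρ₂) • fun a => (gB (B' i) (C' i * 𝒯) a) ^ 2)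
    (hBu' : ∀ i, B' (i + 1)
      = fun a => B' i a - θ i * (M1B' (i + 1) a / Real.sqrt (M2B' (i + 1) a)))
    (hM1C' : ∀ i, M1C' (i + 1) = ρ₁ • M1C' i + (1 - ρ₁) • (gC (B' i) (C' i * 𝒯) * 𝒯ᵀ))
    (hM2C' : ∀ i, M2C' (i + 1)
      = ρ₂ • M2C' i + (1 - ρ₂) • Matrix.of (fun a b => ((gC (B' i) (C' i * 𝒯) * 𝒯ᵀ) a b) ^ 2))
    (hCu' : ∀ i, C' (i + 1)
      = C' i - θ i • Matrix.of (fun a b => M1C' (i + 1) a b / Real.sqrt (M2C' (i + 1) a b)))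
    -- initializations:
    (hB0 : B' 0 = B 0) (hC0 : C' 0 * 𝒯 = C 0)
    (hM1B0 : M1B 0 = 0) (hM2B0 : M2B 0 = 0) (hM1C0 : M1C 0 = 0) (hM2C0 : M2C 0 = 0)
    (hM1B0' : M1B' 0 = 0) (hM2B0' : M2B' 0 = 0) (hM1C0' : M1C' 0 = 0) (hM2C0' : M2C' 0 = 0) :
    ∀ i, B' i = B i ∧ C' i * 𝒯 = C i ∧
      M1C' i = M1C i * 𝒯ᵀ ∧ M2C' i = M2C i * 𝒯ᵀ.map (fun t => |t|) := by
  have hsq := IsSignedPerm.of_sq_mul_transpose (m := Fin q) h𝒯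
  have hdiv := IsSignedPerm.of_div_mul_transpose_mul (m := Fin q) h𝒯 Real.sqrt
  suffices H : ∀ i, (B' i = B i ∧ C' i * 𝒯 = C i ∧
      M1C' i = M1C i * 𝒯ᵀ ∧ M2C' i = M2C i * 𝒯ᵀ.map (fun t => |t|)) ∧
      M1B' i = M1B i ∧ M2B' i = M2B i from fun i => (H i).1
  intro i
  induction i with
  | zero => exact ⟨⟨hB0, hC0, by rw [hM1C0', hM1C0, Matrix.zero_mul],
      by rw [hM2C0', hM2C0, Matrix.zero_mul]⟩, by rw [hM1B0', hM1B0], by rw [hM2B0', hM2B0]⟩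
  | succ i ih =>
    obtain ⟨⟨hB, hC, h1C, h2C⟩, h1B, h2B⟩ := ih
    have hgB : gB (B' i) (C' i * 𝒯) = gB (B i) (C i) := by rw [hB, hC]
    have hgC : gC (B' i) (C' i * 𝒯) = gC (B i) (C i) := by rw [hB, hC]
    have h1B' : M1B' (i + 1) = M1B (i + 1) := by rw [hM1B', hM1B, h1B, hgB]
    have h2B' : M2B' (i + 1) = M2B (i + 1) := by rw [hM2B', hM2B, h2B, hgB]
    have h1C' : M1C' (i + 1) = M1C (i + 1) * 𝒯ᵀ := by
      rw [hM1C', hM1C, h1C, hgC, Matrix.add_mul, Matrix.smul_mul, Matrix.smul_mul]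
    have h2C' : M2C' (i + 1) = M2C (i + 1) * 𝒯ᵀ.map (fun t => |t|) := by
      rw [hM2C', hM2C, h2C, hgC, hsq, Matrix.add_mul, Matrix.smul_mul, Matrix.smul_mul]
    refine ⟨⟨?_, ?_, h1C', h2C'⟩, h1B', h2B'⟩
    · rw [hBu', hBu, hB, h1B', h2B']
    · rw [hCu', hCu, Matrix.sub_mul, hC, Matrix.smul_mul, h1C', h2C', hdiv]

/-- Deterministic core of the Adam invariance theorem. Running Adam on `F_D`
(gradients `gB`, `gC`) and on `F_{τ(D)}(B,C) = F_D(B, C𝒯)` (gradients given by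
the chain rule), with `𝒯` a signed permutation matrix, zero initial moments,
`B′₀ = B₀`, `C′₀𝒯 = C₀`, and well-defined entrywise divisions, yields for all
`i`: `B′ᵢ = Bᵢ`, `C′ᵢ𝒯 = Cᵢ`, `M′ᵢ⁽¹'ᶜ⁾ = Mᵢ⁽¹'ᶜ⁾𝒯ᵀ`, and
`M′ᵢ⁽²'ᶜ⁾ = Mᵢ⁽²'ᶜ⁾|𝒯ᵀ|`. -/
theorem adam_conjugation {p q d : ℕ}
    (gB : (Fin p → ℝ) → Matrix (Fin q) (Fin d) ℝ → (Fin p → ℝ))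
    (gC : (Fin p → ℝ) → Matrix (Fin q) (Fin d) ℝ → Matrix (Fin q) (Fin d) ℝ)
    (𝒯 : Matrix (Fin d) (Fin d) ℝ)
    (h𝒯 : ∃ (σ : Equiv.Perm (Fin d)) (ε : Fin d → ℝ),
      (∀ i, ε i = 1 ∨ ε i = -1) ∧ 𝒯 = σ.permMatrix ℝ * Matrix.diagonal ε)
    (ρ₁ ρ₂ : ℝ) (hρ₁ : 0 < ρ₁ ∧ ρ₁ < 1) (hρ₂ : 0 < ρ₂ ∧ ρ₂ < 1)
    (θ : ℕ → ℝ)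
    (B B' : ℕ → Fin p → ℝ) (C C' : ℕ → Matrix (Fin q) (Fin d) ℝ)
    (M1B M2B M1B' M2B' : ℕ → Fin p → ℝ)
    (M1C M2C M1C' M2C' : ℕ → Matrix (Fin q) (Fin d) ℝ)
    -- Adam iteration for the original objective `F_D`:
    (hM1B : ∀ i, M1B (i + 1) = ρ₁ • M1B i + (1 - ρ₁) • gB (B i) (C i))
    (hM2B : ∀ i, M2B (i + 1) = ρ₂ • M2B i + (1 - ρ₂) • fun a => (gB (B i) (C i) a) ^ 2)
    (hBu : ∀ i, B (i + 1) = fun a => B i a - θ i * (M1B (i + 1) a / Real.sqrt (M2B (i + 1) a)))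
    (hM1C : ∀ i, M1C (i + 1) = ρ₁ • M1C i + (1 - ρ₁) • gC (B i) (C i))
    (hM2C : ∀ i, M2C (i + 1)
      = ρ₂ • M2C i + (1 - ρ₂) • Matrix.of (fun a b => (gC (B i) (C i) a b) ^ 2))
    (hCu : ∀ i, C (i + 1)
      = C i - θ i • Matrix.of (fun a b => M1C (i + 1) a b / Real.sqrt (M2C (i + 1) a b)))
    -- Adam iteration for the transformed objective `F_{τ(D)}`,
    -- whose gradients are `gB (B, C𝒯)` and `gC (B, C𝒯) 𝒯ᵀ` by the chain rule:
    (hM1B' : ∀ i, M1B' (i + 1) = ρ₁ • M1B' i + (1 - ρ₁) • gB (B' i) (C' i * 𝒯))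
    (hM2B' : ∀ i, M2B' (i + 1)
      = ρ₂ • M2B' i + (1 - ρ₂) • fun a => (gB (B' i) (C' i * 𝒯) a) ^ 2)
    (hBu' : ∀ i, B' (i + 1)
      = fun a => B' i a - θ i * (M1B' (i + 1) a / Real.sqrt (M2B' (i + 1) a)))
    (hM1C' : ∀ i, M1C' (i + 1) = ρ₁ • M1C' i + (1 - ρ₁) • (gC (B' i) (C' i * 𝒯) * 𝒯ᵀ))
    (hM2C' : ∀ i, M2C' (i + 1)
      = ρ₂ • M2C' i + (1 - ρ₂) • Matrix.of (fun a b => ((gC (B' i) (C' i * 𝒯) * 𝒯ᵀ) a b) ^ 2))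
    (hCu' : ∀ i, C' (i + 1)
      = C' i - θ i • Matrix.of (fun a b => M1C' (i + 1) a b / Real.sqrt (M2C' (i + 1) a b)))
    -- initializations:
    (hB0 : B' 0 = B 0) (hC0 : C' 0 * 𝒯 = C 0)
    (hM1B0 : M1B 0 = 0) (hM2B0 : M2B 0 = 0) (hM1C0 : M1C 0 = 0) (hM2C0 : M2C 0 = 0)
    (hM1B0' : M1B' 0 = 0) (hM2B0' : M2B' 0 = 0) (hM1C0' : M1C' 0 = 0) (hM2C0' : M2C' 0 = 0)
    -- all entrywise divisions are well defined:
    (hwdB : ∀ i a, M2B (i + 1) a ≠ 0) (hwdC : ∀ i a b, M2C (i + 1) a b ≠ 0) :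
    ∀ i, B' i = B i ∧ C' i * 𝒯 = C i ∧
      M1C' i = M1C i * 𝒯ᵀ ∧ M2C' i = M2C i * 𝒯ᵀ.map (fun t => |t|) :=
  adam_conjugation_general gB gC 𝒯 h𝒯 ρ₁ ρ₂ θ B B' C C' M1B M2B M1B' M2B' M1C M2C M1C' M2C' hM1B
    hM2B hBu hM1C hM2C hCu hM1B' hM2B' hBu' hM1C' hM2C' hCu' hB0 hC0 hM1B0 hM2B0 hM1C0 hM2C0 hM1B0'
    hM2B0' hM1C0' hM2C0'
end
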